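/- For every k ≥ 1, the set Π = S_k \ {rotations of the identity permutation 12⋯k}, viewed as consecutive cyclic patterns of length k, is avoidable: for every n ≥ k, the cyclic class of the increasing permutation 1, 2, …, n contains no pattern of Π as k cyclically consecutive entries. Consequently the maximum cardinality of an avoidable subset of S_k (as consecutive cyclic patterns) is exactly k! − k. -/

import Mathlib

/-- The position obtained from `p` by moving `k` steps forward cyclically. -/
def cyc {n : ℕ} (p : Fin n) (k : ℕ) : Fin n :=
  ⟨(p.val + k) % n, Nat.mod_lt _ p.pos⟩

/-- The window of `k` cyclically consecutive entries of `σ` starting at position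
`p` is order isomorphic to the pattern `π`. -/
def WindowIso {n k : ℕ} (σ : Equiv.Perm (Fin n)) (p : Fin n)
    (π : Equiv.Perm (Fin k)) : Prop :=
  ∀ a b : Fin k, (σ (cyc p a.val) < σ (cyc p b.val) ↔ π a < π b)

/-- `π` is one of the `k` cyclic rotations of the identity pattern `12⋯k`. -/
def IsIdRotation {k : ℕ} (π : Equiv.Perm (Fin k)) : Prop :=
  ∃ r : ℕ, ∀ j : Fin k, (π j).val = (j.val + r) % k

/-- A set of consecutive cyclic patterns of length `k` is avoidable if there are
cyclic permutations of arbitrarily large length (at least `k`) avoiding all of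
its patterns. -/
def AvoidableSet (k : ℕ) (Pat : Set (Equiv.Perm (Fin k))) : Prop :=
  ∀ N : ℕ, ∃ n : ℕ, N ≤ n ∧ k ≤ n ∧ ∃ σ : Equiv.Perm (Fin n),
    ∀ π ∈ Pat, ∀ p : Fin n, ¬ WindowIso σ p π

/-!
Reading the increasing cyclic permutation from position `p` gives `p, p + 1, …, n - 1, 0, 1, …`,
so a window of length `k ≤ n` is an increasing run followed, after the wrap-around, by an
increasing run of smaller entries: a rotation of `12⋯k`. Conversely, in any cyclic permutation of
length `n ≥ k` the `k` windows through the position of the largest entry have their maxima at `k`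
different places, so they realise `k` distinct patterns, none of which an avoided set can contain.
-/

open Finset

lemma cyc_injective {n k : ℕ} (hkn : k ≤ n) (p : Fin n) :
    Function.Injective fun a : Fin k => cyc p a := by
  intro a b h
  have h' : (p.val + a.val) % n = (p.val + b.val) % n := congrArg Fin.val h
  have := Nat.ModEq.add_left_cancel' p.val h'
  rw [Nat.ModEq, Nat.mod_eq_of_lt (by omega), Nat.mod_eq_of_lt (by omega)] at this
  exact Fin.ext this

lemma cyc_cyc_sub {n : ℕ} (q : Fin n) {j : ℕ} (hj : j ≤ n) : cyc (cyc q (n - j)) j = q := by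
  apply Fin.ext
  simp only [cyc, Nat.mod_add_mod]
  rw [Nat.add_assoc, Nat.sub_add_cancel hj, Nat.add_mod_right, Nat.mod_eq_of_lt q.isLt]

theorem Equiv.Perm.eq_of_lt_iff_lt {k : ℕ} {π τ : Equiv.Perm (Fin k)}
    (h : ∀ a b, π a < π b ↔ τ a < τ b) : π = τ := by
  have hmono : Monotone (π * τ⁻¹) := fun x y hxy => by
    rw [← not_lt] at hxy ⊢
    simpa only [Equiv.Perm.mul_apply, h, Equiv.Perm.coe_inv, Equiv.apply_symm_apply] using hxy
  exact mul_inv_eq_one.1 ((Equiv.Perm.monotone_iff _).1 hmono)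

lemma exists_perm_lt_iff_lt {α : Type*} [LinearOrder α] {k : ℕ} {f : Fin k → α}
    (hf : Function.Injective f) : ∃ π : Equiv.Perm (Fin k), ∀ a b, π a < π b ↔ f a < f b := by
  have hsorted : StrictMono (f ∘ Tuple.sort f) :=
    (Tuple.monotone_sort f).strictMono_of_injective (hf.comp (Tuple.sort f).injective)
  refine ⟨(Tuple.sort f)⁻¹, fun a b => ?_⟩
  simpa using hsorted.lt_iff_lt (a := (Tuple.sort f)⁻¹ a) (b := (Tuple.sort f)⁻¹ b) |>.symm

lemma exists_windowIso {n k : ℕ} (hkn : k ≤ n) (σ : Equiv.Perm (Fin n)) (p : Fin n) :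
    ∃ π : Equiv.Perm (Fin k), WindowIso σ p π := by
  obtain ⟨π, hπ⟩ := exists_perm_lt_iff_lt (σ.injective.comp (cyc_injective hkn p))
  exact ⟨π, fun a b => (hπ a b).symm⟩

open Fin.NatCast in
lemma isIdRotation_iff {k : ℕ} [NeZero k] (π : Equiv.Perm (Fin k)) :
    IsIdRotation π ↔ ∃ r : Fin k, π = Equiv.addRight r := by
  constructor
  · rintro ⟨r, hr⟩
    refine ⟨r, Equiv.ext fun j => Fin.ext ?_⟩
    rw [hr, Equiv.coe_addRight, Fin.val_add, Fin.val_natCast, Nat.add_mod_mod]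
  · rintro ⟨r, rfl⟩
    exact ⟨r, fun j => Fin.val_add j r⟩

open Classical in
lemma card_isIdRotation {k : ℕ} [NeZero k] :
    #{π : Equiv.Perm (Fin k) | IsIdRotation π} = k := by
  have hrange : ({π | IsIdRotation π} : Finset (Equiv.Perm (Fin k))) =
      univ.image Equiv.addRight := by
    ext π
    simp [isIdRotation_iff, eq_comm]
  have hinj : Function.Injective (Equiv.addRight : Fin k → Equiv.Perm (Fin k)) :=
    fun r s h => by simpa using congrArg (· 0) h
  rw [hrange, card_image_of_injective _ hinj, card_univ, Fintype.card_fin]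

/-- In the window of `0, 1, …, n - 1` starting at `p`, the entries from offset `n - p` on wrap
around to the bottom; on `Fin k` this is the rotation by `k - min k (n - p)`. -/
lemma add_mod_lt_add_mod_iff {n k p a b : ℕ} (hkn : k ≤ n) (hp : p < n) (ha : a < k)
    (hb : b < k) :
    (p + a) % n < (p + b) % n ↔
      (a + (k - min k (n - p))) % k < (b + (k - min k (n - p))) % k := by
  have hmod : ∀ {x m : ℕ}, x < 2 * m → x % m = if x < m then x else x - m := by
    intro x m hx
    split_ifs with h
    · exact Nat.mod_eq_of_lt h
    · rw [Nat.mod_eq_sub_mod (by omega), Nat.mod_eq_of_lt (by omega)]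
  rw [hmod (x := p + a) (by omega), hmod (x := p + b) (by omega),
    hmod (x := a + _) (by omega), hmod (x := b + _) (by omega)]
  split_ifs <;> omega

open Fin.NatCast in
lemma isIdRotation_of_windowIso_one {n k : ℕ} [NeZero k] (hkn : k ≤ n) {p : Fin n}
    {π : Equiv.Perm (Fin k)} (h : WindowIso (1 : Equiv.Perm (Fin n)) p π) : IsIdRotation π := by
  rw [isIdRotation_iff]
  refine ⟨(k - min k (n - p) : ℕ), Equiv.Perm.eq_of_lt_iff_lt fun a b => ?_⟩
  rw [← h a b]
  simp only [Equiv.Perm.one_apply, Fin.lt_def, cyc, Equiv.coe_addRight, Fin.val_add,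
    Fin.val_natCast, Nat.add_mod_mod]
  exact add_mod_lt_add_mod_iff hkn p.isLt a.isLt b.isLt

lemma avoidableSet_not_isIdRotation {k : ℕ} [NeZero k] :
    AvoidableSet k {π | ¬ IsIdRotation π} := fun N =>
  ⟨max N k, le_max_left _ _, le_max_right _ _, 1, fun _ hπ _ hw =>
    hπ (isIdRotation_of_windowIso_one (le_max_right _ _) hw)⟩

lemma exists_windowIso_argmax {n k : ℕ} (hkn : k ≤ n) (σ : Equiv.Perm (Fin n)) (j : Fin k) :
    ∃ π : Equiv.Perm (Fin k), (∃ p, WindowIso σ p π) ∧ ∀ i, i ≠ j → π i < π j := by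
  have : Nonempty (Fin n) := ⟨⟨0, j.pos.trans_le hkn⟩⟩
  obtain ⟨q, hq⟩ := Finite.exists_max σ
  set p := cyc q (n - j)
  have hpj : cyc p j = q := cyc_cyc_sub q (by omega)
  obtain ⟨π, hπ⟩ := exists_windowIso hkn σ p
  refine ⟨π, ⟨p, hπ⟩, fun i hij => (hπ i j).1 ?_⟩
  rw [hpj]
  refine (hq _).lt_of_ne fun he => hij ?_
  exact cyc_injective hkn p (σ.injective (he.trans (congrArg σ hpj).symm))

lemma card_le_factorial_sub_of_avoidableSet {k : ℕ} {Pat : Finset (Equiv.Perm (Fin k))}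
    (h : AvoidableSet k Pat) : #Pat ≤ k.factorial - k := by
  obtain ⟨n, -, hkn, σ, hσ⟩ := h 0
  choose π hπ hmax using exists_windowIso_argmax hkn σ
  have hinj : Function.Injective π := fun j j' hjj => by
    by_contra hne
    exact lt_asymm (hmax j j' (Ne.symm hne)) (hjj ▸ hmax j' j hne)
  have hmissed : ∀ j, π j ∈ Patᶜ := fun j => mem_compl.2 fun hj =>
    (hπ j).elim fun p hp => hσ _ (by simpa using hj) p hp
  have hk := card_le_card_of_injOn (s := univ) π (fun j _ => hmissed j) hinj.injOn
  have hPat := card_le_univ Pat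
  simp only [card_univ, card_compl, Fintype.card_perm, Fintype.card_fin] at hk hPat
  omega

/-- for `k ≥ 1`, the increasing cyclic permutation of any length
`n ≥ k` contains only rotations of the identity as consecutive cyclic patterns of
length `k` (so `S_k` minus the `k` rotations of the identity is avoidable);
consequently the maximum cardinality of an avoidable set of consecutive cyclic
patterns of length `k` is exactly `k! - k`. -/
theorem stmt18 (k : ℕ) (hk : 1 ≤ k) :
    (∀ n, k ≤ n → ∀ (p : Fin n) (π : Equiv.Perm (Fin k)),
      WindowIso (1 : Equiv.Perm (Fin n)) p π → IsIdRotation π) ∧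
    IsGreatest {m : ℕ | ∃ Pat : Finset (Equiv.Perm (Fin k)),
        Pat.card = m ∧ AvoidableSet k ↑Pat} (Nat.factorial k - k) := by
  classical
  have : NeZero k := ⟨by omega⟩
  refine ⟨fun n hkn p π h => isIdRotation_of_windowIso_one hkn h,
    ⟨({π | ¬ IsIdRotation π} : Finset _), ?_, ?_⟩, ?_⟩
  · rw [filter_not, card_sdiff_of_subset (filter_subset _ _), card_isIdRotation, card_univ,
      Fintype.card_perm, Fintype.card_fin]
  · simpa using avoidableSet_not_isIdRotation
  · rintro m ⟨Pat, rfl, hPat⟩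
    exact card_le_factorial_sub_of_avoidableSet hPat
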